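/- arXiv:2307.08102 — 2 statements merged into one kernel-verified Lean document; each statement's English description precedes it below -/
import Mathlib

section
/- Let k ≥ k_0, t ∈ {0,1,2}^k and m ∈ ℕ be such that k_{m−1} ≤ k < k_m. Let n ≥ m, s ∈ {0,1,2}^{k_n−1} with t ≺ s, and i ∈ {0,1}. If G^i_s ∉ 𝒢_t, then N(i,s) > k. -/
open Pointwise MeasureTheory

namespace CCS

/-- `dSeq a n` is the common length `d_n = ∏_{i=1}^n (1 - a_i)/2` of the intervals of the
`n`-th step of the construction of the central Cantor set `C(a)` (`d_0 = 1`).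
The sequence `a` is indexed from `1`; the value `a 0` is irrelevant. -/
noncomputable def dSeq (a : ℕ → ℝ) (n : ℕ) : ℝ :=
  ∏ i ∈ Finset.Icc 1 n, ((1 - a i) / 2)

/-- Left endpoint of the interval `I_t`, `t ∈ {0,1}^n` (coded as a list, the paper's
`t_j` being `t.getD (j-1) 0`): `l(I_t) = ∑_{j=1}^n t_j (d_{j-1} - d_j)`. -/
noncomputable def Il (a : ℕ → ℝ) (t : List ℕ) : ℝ :=
  ∑ j ∈ Finset.range t.length, (t.getD j 0 : ℝ) * (dSeq a j - dSeq a (j + 1))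

/-- The `n`-th step `C_n(a)` of the construction of the central Cantor set:
the union of the intervals `I_t = [l(I_t), l(I_t) + d_n]` over `t ∈ {0,1}^n`. -/
noncomputable def cantorStep (a : ℕ → ℝ) (n : ℕ) : Set ℝ :=
  ⋃ t ∈ {t : List ℕ | t.length = n ∧ ∀ j ∈ t, j ≤ 1},
    Set.Icc (Il a t) (Il a t + dSeq a n)

/-- The central Cantor set `C(a) = ⋂ₙ C_n(a)`. -/
noncomputable def cantorSet (a : ℕ → ℝ) : Set ℝ := ⋂ n, cantorStep a n

/-- Left endpoint of the interval `J_s = I_t - I_p`, for `s ∈ {0,1,2}^n`: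
`l(J_s) = -1 + ∑_{j=1}^n s_j (d_{j-1} - d_j)`. -/
noncomputable def Jl (a : ℕ → ℝ) (s : List ℕ) : ℝ :=
  -1 + ∑ j ∈ Finset.range s.length, (s.getD j 0 : ℝ) * (dSeq a j - dSeq a (j + 1))

/-- Right endpoint of `J_s`: `r(J_s) = l(J_s) + 2 d_n`. -/
noncomputable def Jr (a : ℕ → ℝ) (s : List ℕ) : ℝ :=
  Jl a s + 2 * dSeq a s.length

/-- The interval `J_s`. -/
noncomputable def Jset (a : ℕ → ℝ) (s : List ℕ) : Set ℝ := Set.Icc (Jl a s) (Jr a s)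

/-- Left endpoint of the gap `G^i_s` (`i = 0`: left gap, `i = 1`: right gap) of `J_s`. -/
noncomputable def Gl (a : ℕ → ℝ) (i : ℕ) (s : List ℕ) : ℝ :=
  Jl a s + (i : ℝ) * (dSeq a s.length - dSeq a (s.length + 1)) + 2 * dSeq a (s.length + 1)

/-- Right endpoint of the gap `G^i_s`. -/
noncomputable def Gr (a : ℕ → ℝ) (i : ℕ) (s : List ℕ) : ℝ :=
  Jl a s + ((i : ℝ) + 1) * (dSeq a s.length - dSeq a (s.length + 1))

/-- The gap `G^i_s ⊆ J_s`, an open interval. -/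
noncomputable def Gset (a : ℕ → ℝ) (i : ℕ) (s : List ℕ) : Set ℝ :=
  Set.Ioo (Gl a i s) (Gr a i s)

/-- `N(0,s) = max {j : s_j > 0}`, `N(1,s) = max {j : s_j < 2}` (1-based, `max ∅ = 0`). -/
noncomputable def Nidx (i : ℕ) (s : List ℕ) : ℕ :=
  sSup {j | 1 ≤ j ∧ j ≤ s.length ∧
    (if i = 0 then 0 < s.getD (j - 1) 0 else s.getD (j - 1) 0 < 2)}

/-- The family `𝒢^{i0}_{s0}(n)` of (indices of) gaps of rank `n`, for
`s0 ∈ {0,1,2}^{k_m - 1}`; a gap `G^i_s` is coded by the pair `(i, s)`.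
`𝒢^{i0}_{s0}(m) = {G^{i0}_{s0}}` and for `n > m`,
`𝒢^{i0}_{s0}(n)` consists of the gap `Ḡ^{i0}_{s0}(n)` together with the gaps
`Ḡ^1_{t^j}(n)`, `Ḡ^0_{t^(j+1)}(n)` for all `G^j_t ∈ 𝒢^{i0}_{s0}(l)`, `m ≤ l < n`. -/
def gapFamily (k : ℕ → ℕ) (i0 : ℕ) (s0 : List ℕ) (m : ℕ) (n : ℕ) : Set (ℕ × List ℕ) :=
  if n ≤ m then {(i0, s0)}
  else
    {(i0, s0 ++ List.replicate (k n - k m) (2 * i0))} ∪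
      ⋃ (l : ℕ) (_ : m ≤ l) (hl : l < n),
        ⋃ p ∈ gapFamily k i0 s0 m l,
          ({(1, p.2 ++ p.1 :: List.replicate (k n - k l - 1) 2),
            (0, p.2 ++ (p.1 + 1) :: List.replicate (k n - k l - 1) 0)} : Set (ℕ × List ℕ))
termination_by n
decreasing_by exact hl

/-- The family `𝒢^{i0}_{s0} = ⋃_{n ≥ m} 𝒢^{i0}_{s0}(n)`. -/
def gapFamilyAll (k : ℕ → ℕ) (i0 : ℕ) (s0 : List ℕ) (m : ℕ) : Set (ℕ × List ℕ) :=
  ⋃ (n : ℕ) (_ : m ≤ n), gapFamily k i0 s0 m n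

/-- The family `𝒢_t := 𝒢^0_{t ++ 0^{(k_m - |t| - 1)}} ∪ 𝒢^1_{t ++ 2^{(k_m - |t| - 1)}}`
for `t ∈ {0,1,2}^k` with `k_{m-1} ≤ k < k_m`. -/
def gapFamilyT (k : ℕ → ℕ) (m : ℕ) (t : List ℕ) : Set (ℕ × List ℕ) :=
  gapFamilyAll k 0 (t ++ List.replicate (k m - t.length - 1) 0) m ∪
    gapFamilyAll k 1 (t ++ List.replicate (k m - t.length - 1) 2) m

/-- The union `⋃ 𝒢` of a family of (indices of) gaps, as a subset of `ℝ`. -/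
noncomputable def gapUnion (a : ℕ → ℝ) (G : Set (ℕ × List ℕ)) : Set ℝ :=
  ⋃ p ∈ G, Gset a p.1 p.2

/-- `padSeq k c s m n` is the index of the gap `G^i(s,n)` (for `c = 2i`):
`s ++ c^{(k_m - |s| - 1)} ++ 1 ++ c^{(k_{m+1} - k_m - 1)} ++ 1 ++ ⋯ ++ 1 ++ c^{(k_n - k_{n-1} - 1)}`. -/
def padSeq (k : ℕ → ℕ) (c : ℕ) (s : List ℕ) (m : ℕ) : ℕ → List ℕ
  | 0 => s ++ List.replicate (k m - s.length - 1) c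
  | n + 1 =>
    if n + 1 ≤ m then s ++ List.replicate (k m - s.length - 1) c
    else padSeq k c s m n ++ 1 :: List.replicate (k (n + 1) - k n - 1) c

/-- `δ_n := min {3d_i - d_{i-1} : k_{n-1} + 1 ≤ i ≤ k_n - 1}` (as an element of `EReal`,
so that `min ∅ = ⊤ = ∞`). -/
noncomputable def deltaMin (a : ℕ → ℝ) (k : ℕ → ℕ) (n : ℕ) : EReal :=
  sInf ((fun i => ((3 * dSeq a i - dSeq a (i - 1) : ℝ) : EReal)) ''
    (Set.Icc (k (n - 1) + 1) (k n - 1)))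

/-- `Δ_n := max {3d_i - d_{i-1} : k_{n-1} + 1 ≤ i ≤ k_n - 1}` (`max ∅ = ⊥ = -∞`). -/
noncomputable def deltaMax (a : ℕ → ℝ) (k : ℕ → ℕ) (n : ℕ) : EReal :=
  sSup ((fun i => ((3 * dSeq a i - dSeq a (i - 1) : ℝ) : EReal)) ''
    (Set.Icc (k (n - 1) + 1) (k n - 1)))

/-- `m_n := min { δ_n - (d_{k_n - 1} - d_{k_n}), 4 d_{k_n} - Δ_n }`. -/
noncomputable def mSeq (a : ℕ → ℝ) (k : ℕ → ℕ) (n : ℕ) : EReal :=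
  min (deltaMin a k n - ((dSeq a (k n - 1) - dSeq a (k n) : ℝ) : EReal))
    (((4 * dSeq a (k n) : ℝ) : EReal) - deltaMax a k n)

/-- `∑_{i=n+1}^∞ (d_{k_i - 1} - d_{k_i})`. -/
noncomputable def tailSum (a : ℕ → ℝ) (k : ℕ → ℕ) (n : ℕ) : ℝ :=
  ∑' i : ℕ, (dSeq a (k (n + 1 + i) - 1) - dSeq a (k (n + 1 + i)))

/-- Condition `(*)`: `m_n ≥ 2 ∑_{i=n+1}^∞ (d_{k_i - 1} - d_{k_i})` for every `n ∈ ℕ`. -/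
def condStar (a : ℕ → ℝ) (k : ℕ → ℕ) : Prop :=
  ∀ n : ℕ, 1 ≤ n → ((2 * tailSum a k n : ℝ) : EReal) ≤ mSeq a k n

/-- `(k_n)_{n ≥ 1}` is the increasing enumeration of all indices greater than `k 0 = k₀`
at which `a` exceeds `1/3`. -/
def IsGapEnum (a : ℕ → ℝ) (k : ℕ → ℕ) : Prop :=
  StrictMono k ∧ (∀ n, 1 ≤ n → k 0 < k n ∧ 1 / 3 < a (k n)) ∧
    (∀ j, k 0 < j → 1 / 3 < a j → ∃ n, 1 ≤ n ∧ k n = j)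

/-- `G` is a gap of `E`: a bounded connected component of `ℝ ∖ E`. -/
def IsGapOf (E G : Set ℝ) : Prop :=
  (∃ x ∉ E, G = connectedComponentIn Eᶜ x) ∧ Bornology.IsBounded G

/-- `C` is a proper (nontrivial) connected component of `E`. -/
def IsProperComponentOf (E C : Set ℝ) : Prop :=
  (∃ x ∈ E, C = connectedComponentIn E x) ∧ C.Nontrivial

/-- `E` is a Cantorval: a perfect set with infinitely many gaps such that both endpoints
of every gap are accumulated both by gaps and by proper components of `E`. -/
def IsCantorval (E : Set ℝ) : Prop :=
  Perfect E ∧ {G : Set ℝ | IsGapOf E G}.Infinite ∧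
    ∀ G, IsGapOf E G → ∀ p, p = sInf G ∨ p = sSup G →
      (∀ ε > 0, ∃ G', IsGapOf E G' ∧ G' ≠ G ∧ G' ⊆ Set.Ioo (p - ε) (p + ε)) ∧
      (∀ ε > 0, ∃ C, IsProperComponentOf E C ∧ C ⊆ Set.Ioo (p - ε) (p + ε))

/-- `J_s` and `J_u` (of length `k_m - 1`) are associated:
`N := N(0,s) = N(1,u) ∈ {k_{m-1}+1, …, k_m - 1}`, `s|(N-1) = u|(N-1)`, `u_N = s_N - 1`.
Then `J_u` is the interval covering `𝒢^0_s` and `J_s` is the interval covering `𝒢^1_u`. -/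
def Associated (k : ℕ → ℕ) (m : ℕ) (s u : List ℕ) : Prop :=
  s.length = k m - 1 ∧ u.length = k m - 1 ∧
    Nidx 0 s = Nidx 1 u ∧
    k (m - 1) + 1 ≤ Nidx 0 s ∧ Nidx 0 s ≤ k m - 1 ∧
    s.take (Nidx 0 s - 1) = u.take (Nidx 0 s - 1) ∧
    u.getD (Nidx 0 s - 1) 0 = s.getD (Nidx 0 s - 1) 0 - 1

/-- `G^i_g ⊂_* J_v`: the gap `G^i_g` is covered by the interval `J_v`, i.e. `G^i_g`
belongs to a family `𝒢^0_w` (resp. `𝒢^1_w`) such that `J_v` is the interval covering it. -/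
def CoversGap (k : ℕ → ℕ) (i : ℕ) (g : List ℕ) (v : List ℕ) : Prop :=
  ∃ m w, 1 ≤ m ∧
    ((Associated k m w v ∧ (i, g) ∈ gapFamilyAll k 0 w m) ∨
      (Associated k m v w ∧ (i, g) ∈ gapFamilyAll k 1 w m))

/-- The achievement set `E(x) = {∑_{j ∈ A} x_j : A ⊆ ℕ}` of a series (indexed from `1`). -/
def achievementSet (x : ℕ → ℝ) : Set ℝ :=
  {y | ∃ A : Set ℕ, A ⊆ {n | 1 ≤ n} ∧ HasSum (A.indicator x) y}

/-- Lemma: if `t ≺ s`, `s ∈ {0,1,2}^{kₙ-1}`, `i ∈ {0,1}` and `G^i_s ∉ 𝒢_t`,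
then `N(i,s) > k = |t|`. -/
theorem Nidx_gt_of_not_mem_gapFamilyT (a : ℕ → ℝ) (k : ℕ → ℕ)
    (ha : ∀ n, 1 ≤ n → 0 < a n ∧ a n < 1)
    (hinf : {n : ℕ | 1 ≤ n ∧ 1 / 3 < a n}.Infinite)
    (hk0 : a (k 0 + 1) < 1 / 3)
    (hk : IsGapEnum a k)
    (t : List ℕ) (ht2 : ∀ x ∈ t, x ≤ 2) (htk0 : k 0 ≤ t.length)
    (m : ℕ) (hm : 1 ≤ m) (hm1 : k (m - 1) ≤ t.length) (hm2 : t.length < k m)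
    (n : ℕ) (hn : m ≤ n)
    (s : List ℕ) (hs2 : ∀ x ∈ s, x ≤ 2) (hslen : s.length = k n - 1) (hts : t <+: s)
    (i : ℕ) (hi : i ≤ 1)
    (hG : (i, s) ∉ gapFamilyT k m t) :
    t.length < Nidx i s := by
  by_contra hcon
  push_neg at hcon
  have hkn1 : 1 ≤ k n := by
    have := (hk.2.1 n (hm.trans hn)).1; omega
  have hkmn : k m ≤ k n := hk.1.monotone hn
  -- all entries of s beyond position t.length equal 2 * i
  have hbdd : BddAbove {j | 1 ≤ j ∧ j ≤ s.length ∧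
      (if i = 0 then 0 < s.getD (j - 1) 0 else s.getD (j - 1) 0 < 2)} :=
    ⟨s.length, fun j hj => hj.2.1⟩
  have hent : ∀ j, t.length ≤ j → j < s.length → s.getD j 0 = 2 * i := by
    intro j hj1 hj2
    by_contra hne
    have heq : s.getD j 0 = s[j] := List.getD_eq_getElem s 0 hj2
    have hle : s[j] ≤ 2 := hs2 _ (List.getElem_mem hj2)
    rw [heq] at hne
    have hmem : (j + 1) ∈ {j | 1 ≤ j ∧ j ≤ s.length ∧
        (if i = 0 then 0 < s.getD (j - 1) 0 else s.getD (j - 1) 0 < 2)} := by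
      refine ⟨by omega, by omega, ?_⟩
      simp only [Nat.add_sub_cancel, heq]
      interval_cases i
      · rw [if_pos (by norm_num : ((0:ℕ) = 0))]; omega
      · rw [if_neg (by norm_num : ¬((1:ℕ) = 0))]; omega
    have hle2 := le_csSup hbdd hmem
    have : j + 1 ≤ t.length := le_trans hle2 hcon
    omega
  obtain ⟨r, hr⟩ := hts
  have hrlen : r.length = s.length - t.length := by
    have := congrArg List.length hr
    simp at this; omega
  have hrep : r = List.replicate (s.length - t.length) (2 * i) := by
    rw [List.eq_replicate_iff]
    refine ⟨hrlen, fun b hb => ?_⟩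
    obtain ⟨j, hj, hjb⟩ := List.getElem_of_mem hb
    have h1 : t.length + j < s.length := by omega
    have h2 : (t ++ r).getD (t.length + j) 0 = 2 * i := by
      rw [hr]; exact hent _ (by omega) h1
    rw [List.getD_append_right _ _ _ _ (by omega)] at h2
    rw [Nat.add_sub_cancel_left] at h2
    rw [← hjb, ← List.getD_eq_getElem r 0 hj]
    exact h2
  have hs : s = t ++ List.replicate (s.length - t.length) (2 * i) := by
    rw [← hrep, hr]
  exfalso; apply hG
  have key : ∀ c, c = 2 * i →
      (i, s) ∈ gapFamilyAll k i (t ++ List.replicate (k m - t.length - 1) c) m := by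
    intro c hc
    subst hc
    refine Set.mem_iUnion.2 ⟨n, Set.mem_iUnion.2 ⟨hn, ?_⟩⟩
    rw [gapFamily]
    by_cases hnm : n ≤ m
    · have hnm' : n = m := le_antisymm hnm hn
      have hkeq : k n = k m := by rw [hnm']
      have hlen : s.length - t.length = k m - t.length - 1 := by omega
      simp only [hnm, if_true, Set.mem_singleton_iff]
      rw [hs, hlen]
    · simp only [hnm, if_false]
      left
      have hnm2 : m < n := lt_of_not_ge hnm
      have hkmkn : k m < k n := hk.1 hnm2
      have hlen : s.length - t.length = (k m - t.length - 1) + (k n - k m) := by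
        omega
      simp only [Set.mem_singleton_iff]
      rw [hs, hlen, List.replicate_add, ← List.append_assoc]
  interval_cases i
  · exact Or.inl (key 0 rfl)
  · exact Or.inr (key 2 rfl)
end CCS
end

section
/- Let m ∈ ℕ, k ∈ {k_{m−1}, …, k_m−1} and s ∈ {0,1,2}^k. Then the sequences (r(G^0(s,n)))_{n≥m} and (l(G^0(s,n)))_{n≥m} are strictly increasing, and the sequences (l(G^1(s,n)))_{n≥m} and (r(G^1(s,n)))_{n≥m} are strictly decreasing. -/
open Pointwise MeasureTheory

namespace CCS

private lemma dSeq_pos (a : ℕ → ℝ) (ha : ∀ n, 1 ≤ n → 0 < a n ∧ a n < 1) (n : ℕ) :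
    0 < dSeq a n := by
  apply Finset.prod_pos
  intro i hi
  have h := ha i (Finset.mem_Icc.mp hi).1
  linarith [h.2]

private lemma dSeq_succ (a : ℕ → ℝ) (n : ℕ) :
    dSeq a (n + 1) = dSeq a n * ((1 - a (n + 1)) / 2) := by
  unfold dSeq
  rw [Finset.prod_Icc_succ_top (Nat.le_add_left 1 n)]

private lemma dSeq_lt (a : ℕ → ℝ) (ha : ∀ n, 1 ≤ n → 0 < a n ∧ a n < 1) (n : ℕ) :
    dSeq a (n + 1) < dSeq a n := by
  have h := ha (n + 1) (Nat.le_add_left 1 n)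
  have hp := dSeq_pos a ha n
  rw [dSeq_succ]
  nlinarith [h.1, h.2]

private lemma dSeq_key (a : ℕ → ℝ) (ha : ∀ n, 1 ≤ n → 0 < a n ∧ a n < 1) (j : ℕ)
    (hj : 1 ≤ j) (haj : 1 / 3 < a j) : 3 * dSeq a j < dSeq a (j - 1) := by
  obtain ⟨i, rfl⟩ : ∃ i, j = i + 1 := ⟨j - 1, by omega⟩
  have hp := dSeq_pos a ha i
  rw [dSeq_succ]
  simp only [Nat.add_sub_cancel]
  nlinarith

private lemma getD_replicate {c R j : ℕ} (h : j < R) :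
    (List.replicate R c).getD j 0 = c := by
  simp [List.getD, h]

private lemma Jl_append (a : ℕ → ℝ) (s u : List ℕ) :
    Jl a (s ++ u) = Jl a s + ∑ j ∈ Finset.range u.length,
      (u.getD j 0 : ℝ) * (dSeq a (s.length + j) - dSeq a (s.length + j + 1)) := by
  unfold Jl
  rw [List.length_append, Finset.sum_range_add]
  have h1 : ∀ j ∈ Finset.range s.length,
      ((s ++ u).getD j 0 : ℝ) * (dSeq a j - dSeq a (j + 1))
        = (s.getD j 0 : ℝ) * (dSeq a j - dSeq a (j + 1)) := by
    intro j hj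
    rw [List.getD_append _ _ _ _ (Finset.mem_range.mp hj)]
  have h2 : ∀ j ∈ Finset.range u.length,
      ((s ++ u).getD (s.length + j) 0 : ℝ) *
        (dSeq a (s.length + j) - dSeq a (s.length + j + 1))
        = (u.getD j 0 : ℝ) * (dSeq a (s.length + j) - dSeq a (s.length + j + 1)) := by
    intro j hj
    rw [List.getD_append_right _ _ _ _ (Nat.le_add_right _ _), Nat.add_sub_cancel_left]
  rw [Finset.sum_congr rfl h1, Finset.sum_congr rfl h2]
  ring

private lemma Jl_pad (a : ℕ → ℝ) (s : List ℕ) (c R : ℕ) :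
    Jl a (s ++ 1 :: List.replicate R c) = Jl a s
      + (dSeq a s.length - dSeq a (s.length + 1))
      + (c : ℝ) * (dSeq a (s.length + 1) - dSeq a (s.length + 1 + R)) := by
  rw [Jl_append]
  simp only [List.length_cons, List.length_replicate]
  rw [Finset.sum_range_succ']
  have h1 : ∀ j ∈ Finset.range R,
      (((1 :: List.replicate R c).getD (j + 1) 0 : ℕ) : ℝ) *
        (dSeq a (s.length + (j + 1)) - dSeq a (s.length + (j + 1) + 1))
      = (c : ℝ) * (dSeq a (s.length + 1 + j) - dSeq a (s.length + 1 + j + 1)) := by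
    intro j hj
    have : (1 :: List.replicate R c).getD (j + 1) 0 = c := by
      simpa using getD_replicate (Finset.mem_range.mp hj)
    rw [this]
    ring_nf
  have tel : ∑ i ∈ Finset.range R,
      (dSeq a (s.length + 1 + i) - dSeq a (s.length + 1 + i + 1))
      = dSeq a (s.length + 1) - dSeq a (s.length + 1 + R) := by
    simpa [add_assoc] using Finset.sum_range_sub' (fun j => dSeq a (s.length + 1 + j)) R
  rw [Finset.sum_congr rfl h1, ← Finset.mul_sum, tel]
  simp only [List.getD_cons_zero, Nat.cast_one, Nat.add_zero, add_zero]
  ring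

private lemma strictMonoOn_Ici_of_lt_succ {f : ℕ → ℝ} {m : ℕ}
    (h : ∀ n, m ≤ n → f n < f (n + 1)) : StrictMonoOn f (Set.Ici m) := by
  intro x hx y hy hxy
  have key : ∀ b, x + 1 ≤ b → f x < f b := by
    intro b hb
    induction b, hb using Nat.le_induction with
    | base => exact h x hx
    | succ b hb ih => exact ih.trans (h b (le_trans hx (by omega)))
  exact key y hxy

private lemma strictAntiOn_Ici_of_succ_lt {f : ℕ → ℝ} {m : ℕ}
    (h : ∀ n, m ≤ n → f (n + 1) < f n) : StrictAntiOn f (Set.Ici m) := by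
  intro x hx y hy hxy
  have key : ∀ b, x + 1 ≤ b → f b < f x := by
    intro b hb
    induction b, hb using Nat.le_induction with
    | base => exact h x hx
    | succ b hb ih => exact (h b (le_trans hx (by omega))).trans ih
  exact key y hxy

private lemma padSeq_succ_eq (k : ℕ → ℕ) (c : ℕ) (s : List ℕ) (m n : ℕ) (hn : m ≤ n) :
    padSeq k c s m (n + 1)
      = padSeq k c s m n ++ 1 :: List.replicate (k (n + 1) - k n - 1) c := by
  rw [padSeq, if_neg (by omega)]

private lemma padSeq_length (k : ℕ → ℕ) (c : ℕ) (s : List ℕ) (m : ℕ)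
    (hmono : StrictMono k) (hs : s.length ≤ k m - 1) (hk1 : 1 ≤ k m) :
    ∀ n, m ≤ n → (padSeq k c s m n).length = k n - 1 := by
  intro n hn
  induction n, hn using Nat.le_induction with
  | base =>
    have hbase : padSeq k c s m m = s ++ List.replicate (k m - s.length - 1) c := by
      cases m with
      | zero => rfl
      | succ m' => rw [padSeq, if_pos le_rfl]
    rw [hbase]
    simp only [List.length_append, List.length_replicate]
    omega
  | succ n hn ih =>
    rw [padSeq_succ_eq k c s m n hn]
    have h1 : k n < k (n + 1) := hmono (Nat.lt_succ_self n)
    have h2 : k m ≤ k n := hmono.monotone hn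
    simp only [List.length_append, List.length_cons, List.length_replicate, ih]
    omega

private lemma main_step (a : ℕ → ℝ) (k : ℕ → ℕ) (hmono : StrictMono k) (m : ℕ)
    (s : List ℕ) (hs : s.length ≤ k m - 1) (hk1 : 1 ≤ k m) (hkn1 : ∀ n, m ≤ n → 1 ≤ k n)
    (c n : ℕ) (hn : m ≤ n) :
    Jl a (padSeq k c s m (n + 1)) = Jl a (padSeq k c s m n)
      + (dSeq a (k n - 1) - dSeq a (k n))
      + (c : ℝ) * (dSeq a (k n) - dSeq a (k (n + 1) - 1)) := by
  have hlen := padSeq_length k c s m hmono hs hk1 n hn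
  have h1 : k n < k (n + 1) := hmono (Nat.lt_succ_self n)
  have hkn := hkn1 n hn
  have e1 : k n - 1 + 1 = k n := by omega
  have e2 : k n + (k (n + 1) - k n - 1) = k (n + 1) - 1 := by omega
  rw [padSeq_succ_eq k c s m n hn, Jl_pad, hlen, e1, e2]

/-- Lemma (monotonicity): the sequences `(r(G⁰(s,n)))_{n≥m}` and `(l(G⁰(s,n)))_{n≥m}` are
strictly increasing, and `(l(G¹(s,n)))_{n≥m}` and `(r(G¹(s,n)))_{n≥m}` are strictly
decreasing. -/
theorem gap_endpoints_monotone (a : ℕ → ℝ) (k : ℕ → ℕ)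
    (ha : ∀ n, 1 ≤ n → 0 < a n ∧ a n < 1)
    (hinf : {n : ℕ | 1 ≤ n ∧ 1 / 3 < a n}.Infinite)
    (hk0 : a (k 0 + 1) < 1 / 3)
    (hk : IsGapEnum a k)
    (m : ℕ) (hm : 1 ≤ m) (kk : ℕ) (hkk1 : k (m - 1) ≤ kk) (hkk2 : kk ≤ k m - 1)
    (s : List ℕ) (hs2 : ∀ x ∈ s, x ≤ 2) (hslen : s.length = kk) :
    StrictMonoOn (fun n => Gr a 0 (padSeq k 0 s m n)) (Set.Ici m) ∧
      StrictMonoOn (fun n => Gl a 0 (padSeq k 0 s m n)) (Set.Ici m) ∧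
      StrictAntiOn (fun n => Gl a 1 (padSeq k 2 s m n)) (Set.Ici m) ∧
      StrictAntiOn (fun n => Gr a 1 (padSeq k 2 s m n)) (Set.Ici m) := by
  obtain ⟨hmono, hval, -⟩ := hk
  have hk1 : 1 ≤ k m := by have := (hval m hm).1; omega
  have hs : s.length ≤ k m - 1 := by omega
  have hkn1 : ∀ n, m ≤ n → 1 ≤ k n := by
    intro n hn
    have := (hval n (le_trans hm hn)).1
    omega
  have common : ∀ c n, m ≤ n →
      Jl a (padSeq k c s m (n + 1)) = Jl a (padSeq k c s m n)
        + (dSeq a (k n - 1) - dSeq a (k n))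
        + (c : ℝ) * (dSeq a (k n) - dSeq a (k (n + 1) - 1)) :=
    fun c n hn => main_step a k hmono m s hs hk1 hkn1 c n hn
  have hlen : ∀ c n, m ≤ n → (padSeq k c s m n).length = k n - 1 :=
    fun c n hn => padSeq_length k c s m hmono hs hk1 n hn
  have facts : ∀ n, m ≤ n →
      dSeq a (k (n + 1)) < dSeq a (k (n + 1) - 1) ∧
      3 * dSeq a (k n) < dSeq a (k n - 1) ∧
      0 < dSeq a (k (n + 1)) ∧ 0 < dSeq a (k (n + 1) - 1) := by
    intro n hn
    have hn1 : 1 ≤ n := le_trans hm hn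
    have hkn := hkn1 n hn
    have hkn' := hkn1 (n + 1) (by omega)
    have e3 : k (n + 1) - 1 + 1 = k (n + 1) := by omega
    have A := dSeq_lt a ha (k (n + 1) - 1)
    rw [e3] at A
    have B := dSeq_key a ha (k n) hkn (hval n hn1).2
    exact ⟨A, B, dSeq_pos a ha _, dSeq_pos a ha _⟩
  refine ⟨strictMonoOn_Ici_of_lt_succ ?_, strictMonoOn_Ici_of_lt_succ ?_,
    ?_, ?_⟩
  · intro n hn
    obtain ⟨A, B, C, D⟩ := facts n hn
    simp only [Gr]
    rw [hlen 0 n hn, hlen 0 (n + 1) (by omega), common 0 n hn]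
    have hn1 := hkn1 n hn
    have hn2 := hkn1 (n + 1) (by omega)
    have e1 : k n - 1 + 1 = k n := by omega
    have e3 : k (n + 1) - 1 + 1 = k (n + 1) := by omega
    rw [e1, e3]
    push_cast
    linarith
  · intro n hn
    obtain ⟨A, B, C, D⟩ := facts n hn
    simp only [Gl]
    rw [hlen 0 n hn, hlen 0 (n + 1) (by omega), common 0 n hn]
    have hn1 := hkn1 n hn
    have hn2 := hkn1 (n + 1) (by omega)
    have e1 : k n - 1 + 1 = k n := by omega
    have e3 : k (n + 1) - 1 + 1 = k (n + 1) := by omega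
    rw [e1, e3]
    push_cast
    linarith
  · refine strictAntiOn_Ici_of_succ_lt ?_
    intro n hn
    obtain ⟨A, B, C, D⟩ := facts n hn
    simp only [Gl]
    rw [hlen 2 n hn, hlen 2 (n + 1) (by omega), common 2 n hn]
    have hn1 := hkn1 n hn
    have hn2 := hkn1 (n + 1) (by omega)
    have e1 : k n - 1 + 1 = k n := by omega
    have e3 : k (n + 1) - 1 + 1 = k (n + 1) := by omega
    rw [e1, e3]
    push_cast
    linarith
  · refine strictAntiOn_Ici_of_succ_lt ?_
    intro n hn
    obtain ⟨A, B, C, D⟩ := facts n hn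
    simp only [Gr]
    rw [hlen 2 n hn, hlen 2 (n + 1) (by omega), common 2 n hn]
    have hn1 := hkn1 n hn
    have hn2 := hkn1 (n + 1) (by omega)
    have e1 : k n - 1 + 1 = k n := by omega
    have e3 : k (n + 1) - 1 + 1 = k (n + 1) := by omega
    rw [e1, e3]
    push_cast
    linarith

end CCS
end
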